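/- arXiv:math/0008080 — 8 statements merged into one kernel-verified Lean document; each statement's English description precedes it below -/
import Mathlib

section
/- Let U = {(x,y) ∈ ℂ² : x ≠ 0, s(x,y) ≠ 0, and g(x,y) ≠ βᵢ for all i = 1, …, r−1} and V = {(t,v) ∈ ℂ² : v ≠ 0, v ≠ βᵢ for all i = 1, …, r−1, and t ≠ v}. Then the map Φ₁(x,y) = (f₁(x,y), g(x,y)) restricts to a bijection from U onto V. (In particular (f₁, g) : ℂ² → ℂ² is a birational morphism of the complex plane, i.e. f₁ is a good field generator.) -/
/-- `s(x,y) = y·x^k + P(x)`. -/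
noncomputable def sFun (k : ℕ) (P : Polynomial ℂ) (v : ℂ × ℂ) : ℂ :=
  v.2 * v.1 ^ k + P.eval v.1

/-- `g(x,y) = x^{q₁}·s(x,y)^q`. -/
noncomputable def gFun (k q q₁ : ℕ) (P : Polynomial ℂ) (v : ℂ × ℂ) : ℂ :=
  v.1 ^ q₁ * (sFun k P v) ^ q

/-- `f₁(x,y) = g(x,y) + x^{p₁}·s(x,y)^p·∏ᵢ(βᵢ − g(x,y))^{aᵢ}` (first normal form,
the non-isotrivial case). -/
noncomputable def f1Fun (k p q p₁ q₁ r : ℕ) (P : Polynomial ℂ)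
    (a : Fin (r - 1) → ℕ) (β : Fin (r - 1) → ℂ) (v : ℂ × ℂ) : ℂ :=
  gFun k q q₁ P v +
    v.1 ^ p₁ * (sFun k P v) ^ p * ∏ i, (β i - gFun k q q₁ P v) ^ a i

lemma zpow_pm_one_eq_one {α : ℂ} (hα : α ≠ 0) {n : ℤ} (hn : n = 1 ∨ n = -1)
    (h : α ^ n = 1) : α = 1 := by
  rcases hn with rfl | rfl
  · simpa using h
  · simpa [zpow_neg, inv_eq_one] using h
lemma xs_unique {p q p₁ q₁ : ℕ}
    (huni : (p : ℤ) * q₁ - (q : ℤ) * p₁ = 1 ∨ (p : ℤ) * q₁ - (q : ℤ) * p₁ = -1)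
    {x s x' s' : ℂ} (hx : x ≠ 0) (hs : s ≠ 0) (hx' : x' ≠ 0) (hs' : s' ≠ 0)
    (h1 : x ^ q₁ * s ^ q = x' ^ q₁ * s' ^ q)
    (h2 : x ^ p₁ * s ^ p = x' ^ p₁ * s' ^ p) :
    x = x' ∧ s = s' := by
  set α := x / x' with hαdef
  set γ := s' / s with hγdef
  have hα0 : α ≠ 0 := div_ne_zero hx hx'
  have hγ0 : γ ≠ 0 := div_ne_zero hs' hs
  have e1 : α ^ q₁ = γ ^ q := by
    rw [hαdef, hγdef, div_pow, div_pow, div_eq_div_iff (pow_ne_zero _ hx') (pow_ne_zero _ hs)]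
    linear_combination h1
  have e2 : α ^ p₁ = γ ^ p := by
    rw [hαdef, hγdef, div_pow, div_pow, div_eq_div_iff (pow_ne_zero _ hx') (pow_ne_zero _ hs)]
    linear_combination h2
  have key : ∀ δ : ℂ, δ ≠ 0 → δ ^ ((p : ℤ) * q₁) = δ ^ ((q : ℤ) * p₁) → δ = 1 := by
    intro δ hδ hδe
    apply zpow_pm_one_eq_one hδ huni
    rw [zpow_sub₀ hδ, hδe, div_self (zpow_ne_zero _ hδ)]
  constructor
  · have hα1 : α = 1 := by
      apply key α hα0
      have : α ^ (q₁ * p) = α ^ (p₁ * q) := by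
        rw [pow_mul, pow_mul, e1, e2, ← pow_mul, ← pow_mul, mul_comm q p]
      rw [show (p : ℤ) * q₁ = ((q₁ * p : ℕ) : ℤ) by push_cast; ring,
          show (q : ℤ) * p₁ = ((p₁ * q : ℕ) : ℤ) by push_cast; ring,
          zpow_natCast, zpow_natCast]
      exact this
    rw [hαdef] at hα1
    exact (div_eq_one_iff_eq hx').mp hα1
  · have hγ1 : γ = 1 := by
      apply key γ hγ0
      have : γ ^ (q * p₁) = γ ^ (p * q₁) := by
        rw [pow_mul, pow_mul, ← e1, ← e2, ← pow_mul, ← pow_mul, mul_comm q₁ p₁]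
      rw [show (p : ℤ) * q₁ = ((p * q₁ : ℕ) : ℤ) by push_cast; ring,
          show (q : ℤ) * p₁ = ((q * p₁ : ℕ) : ℤ) by push_cast; ring,
          zpow_natCast, zpow_natCast]
      exact this.symm
    rw [hγdef] at hγ1
    exact ((div_eq_one_iff_eq hs).mp hγ1).symm

lemma xs_exists_aux (p q p₁ q₁ : ℕ) (hN : p * q₁ = q * p₁ + 1) (v c : ℂ)
    (hv : v ≠ 0) (hc : c ≠ 0) :
    ∃ x s : ℂ, x ≠ 0 ∧ s ≠ 0 ∧ x ^ q₁ * s ^ q = v ∧ x ^ p₁ * s ^ p = c := by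
  refine ⟨v ^ p / c ^ q, c ^ q₁ / v ^ p₁,
    div_ne_zero (pow_ne_zero _ hv) (pow_ne_zero _ hc),
    div_ne_zero (pow_ne_zero _ hc) (pow_ne_zero _ hv), ?_, ?_⟩
  · rw [div_pow, div_pow, div_mul_div_comm, ← pow_mul, ← pow_mul, ← pow_mul, ← pow_mul,
      div_eq_iff (mul_ne_zero (pow_ne_zero _ hc) (pow_ne_zero _ hv))]
    rw [hN]; ring
  · rw [div_pow, div_pow, div_mul_div_comm, ← pow_mul, ← pow_mul, ← pow_mul, ← pow_mul,
      div_eq_iff (mul_ne_zero (pow_ne_zero _ hc) (pow_ne_zero _ hv))]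
    rw [show q₁ * p = q * p₁ + 1 from by rw [mul_comm]; exact hN]; ring

lemma xs_exists {p q p₁ q₁ : ℕ}
    (huni : (p : ℤ) * q₁ - (q : ℤ) * p₁ = 1 ∨ (p : ℤ) * q₁ - (q : ℤ) * p₁ = -1)
    (v c : ℂ) (hv : v ≠ 0) (hc : c ≠ 0) :
    ∃ x s : ℂ, x ≠ 0 ∧ s ≠ 0 ∧ x ^ q₁ * s ^ q = v ∧ x ^ p₁ * s ^ p = c := by
  rcases huni with h | h
  · have hN : p * q₁ = q * p₁ + 1 := by
      have : (p : ℤ) * q₁ = (q : ℤ) * p₁ + 1 := by linarith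
      exact_mod_cast this
    exact xs_exists_aux p q p₁ q₁ hN v c hv hc
  · have hN : q * p₁ = p * q₁ + 1 := by
      have : (q : ℤ) * p₁ = (p : ℤ) * q₁ + 1 := by linarith
      exact_mod_cast this
    obtain ⟨x, s, hx, hs, e1, e2⟩ := xs_exists_aux q p q₁ p₁ hN c v hc hv
    exact ⟨x, s, hx, hs, e2, e1⟩


/-- `Φ₁ = (f₁, g)` is a bijection from
`U = {(x,y) : x ≠ 0, s(x,y) ≠ 0, g(x,y) ≠ βᵢ ∀i}` onto
`V = {(t,v) : v ≠ 0, v ≠ βᵢ ∀i, t ≠ v}`; in particular `(f₁, g)` is a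
birational morphism of `ℂ²`, i.e. `f₁` is a good field generator. -/
theorem stmt2 (k : ℕ) (hk : 1 ≤ k) (P : Polynomial ℂ) (hP : P.degree < (k : WithBot ℕ))
    (p q p₁ q₁ : ℕ) (hq₁ : q₁ < q) (hp₁ : p₁ < p)
    (huni : (p : ℤ) * q₁ - (q : ℤ) * p₁ = 1 ∨ (p : ℤ) * q₁ - (q : ℤ) * p₁ = -1)
    (r : ℕ) (hr : 2 ≤ r)
    (a : Fin (r - 1) → ℕ) (ha : ∀ i, 0 < a i)
    (β : Fin (r - 1) → ℂ) (hβinj : Function.Injective β) (hβ0 : ∀ i, β i ≠ 0) :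
    Set.BijOn (fun v : ℂ × ℂ => (f1Fun k p q p₁ q₁ r P a β v, gFun k q q₁ P v))
      {v : ℂ × ℂ | v.1 ≠ 0 ∧ sFun k P v ≠ 0 ∧ ∀ i, gFun k q q₁ P v ≠ β i}
      {w : ℂ × ℂ | w.2 ≠ 0 ∧ (∀ i, w.2 ≠ β i) ∧ w.1 ≠ w.2} := by
  refine ⟨?_, ?_, ?_⟩
  · -- MapsTo
    rintro u ⟨hx, hs, hg⟩
    have hgne : gFun k q q₁ P u ≠ 0 :=
      mul_ne_zero (pow_ne_zero _ hx) (pow_ne_zero _ hs)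
    have hprod : (∏ i, (β i - gFun k q q₁ P u) ^ a i) ≠ 0 := by
      apply Finset.prod_ne_zero_iff.mpr
      intro i _
      exact pow_ne_zero _ (sub_ne_zero.mpr fun h => hg i h.symm)
    refine ⟨hgne, hg, ?_⟩
    simp only [f1Fun]
    intro hcontra
    exact (mul_ne_zero (mul_ne_zero (pow_ne_zero _ hx) (pow_ne_zero _ hs)) hprod)
      (add_eq_left.mp hcontra)
  · -- InjOn
    rintro u ⟨hx, hs, hg⟩ u' ⟨hx', hs', hg'⟩ heq
    simp only [Prod.mk.injEq] at heq
    obtain ⟨hfeq, hgeq⟩ := heq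
    have hprod : (∏ i, (β i - gFun k q q₁ P u) ^ a i) ≠ 0 := by
      apply Finset.prod_ne_zero_iff.mpr
      intro i _
      exact pow_ne_zero _ (sub_ne_zero.mpr fun h => hg i h.symm)
    have h2 : u.1 ^ p₁ * (sFun k P u) ^ p = u'.1 ^ p₁ * (sFun k P u') ^ p := by
      have key : u.1 ^ p₁ * (sFun k P u) ^ p * ∏ i, (β i - gFun k q q₁ P u) ^ a i
          = u'.1 ^ p₁ * (sFun k P u') ^ p * ∏ i, (β i - gFun k q q₁ P u) ^ a i := by
        have := hfeq
        simp only [f1Fun] at this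
        rw [hgeq] at this ⊢
        exact add_left_cancel this
      exact mul_right_cancel₀ hprod key
    have h1 : u.1 ^ q₁ * (sFun k P u) ^ q = u'.1 ^ q₁ * (sFun k P u') ^ q := hgeq
    obtain ⟨hxx, hss⟩ := xs_unique huni hx hs hx' hs' h1 h2
    have hy : u.2 = u'.2 := by
      have hsc : u.2 * u.1 ^ k + P.eval u.1 = u'.2 * u'.1 ^ k + P.eval u'.1 := hss
      rw [← hxx] at hsc
      have := add_right_cancel hsc
      exact mul_right_cancel₀ (pow_ne_zero _ hx) this
    exact Prod.ext hxx hy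
  · -- SurjOn
    rintro w ⟨hv, hβv, htv⟩
    set t := w.1
    set v := w.2
    have hprod : (∏ i, (β i - v) ^ a i) ≠ 0 := by
      apply Finset.prod_ne_zero_iff.mpr
      intro i _
      exact pow_ne_zero _ (sub_ne_zero.mpr fun h => hβv i h.symm)
    set c : ℂ := (t - v) / ∏ i, (β i - v) ^ a i with hcdef
    have hc : c ≠ 0 := div_ne_zero (sub_ne_zero.mpr htv) hprod
    obtain ⟨x, s, hx, hs, e1, e2⟩ := xs_exists huni v c hv hc
    have hsval : sFun k P (x, (s - P.eval x) / x ^ k) = s := by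
      simp only [sFun]
      field_simp
      ring
    have hgval : gFun k q q₁ P (x, (s - P.eval x) / x ^ k) = v := by
      simp only [gFun, hsval]
      exact e1
    have hfval : f1Fun k p q p₁ q₁ r P a β (x, (s - P.eval x) / x ^ k) = t := by
      simp only [f1Fun, hgval, hsval]
      rw [e2, hcdef, div_mul_cancel₀ _ hprod]
      ring
    refine ⟨(x, (s - P.eval x) / x ^ k), ⟨hx, ?_, ?_⟩, ?_⟩
    · rw [hsval]; exact hs
    · intro i; rw [hgval]; exact hβv i
    · simp only [hfval, hgval]
      rfl
end

section
/- Let U = {(x,y) ∈ ℂ² : x ≠ 0, s(x,y) ≠ 0, and g(x,y) ≠ βᵢ for all i = 1, …, r−1} and V₂ = {(t,v) ∈ ℂ² : t ≠ 0, v ≠ 0, and v ≠ βᵢ for all i = 1, …, r−1}. Then the map Φ₂(x,y) = (f₂(x,y), g(x,y)) restricts to a bijection from U onto V₂. (In particular (f₂, g) : ℂ² → ℂ² is a birational morphism of the complex plane, i.e. f₂ is a good field generator.) -/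
/-- `f₂(x,y) = x^{p₁}·s(x,y)^p·∏ᵢ(βᵢ − g(x,y))^{aᵢ}` (second normal form,
the isotrivial case with a puncture at `0`). -/
noncomputable def f2Fun (k p q p₁ q₁ r : ℕ) (P : Polynomial ℂ)
    (a : Fin (r - 1) → ℕ) (β : Fin (r - 1) → ℂ) (v : ℂ × ℂ) : ℂ :=
  v.1 ^ p₁ * (sFun k P v) ^ p * ∏ i, (β i - gFun k q q₁ P v) ^ a i

lemma mono_inj (p q p₁ q₁ : ℕ) (hA : p * q₁ = q * p₁ + 1)
    {x₁ s₁ x₂ s₂ : ℂ} (hx₂ : x₂ ≠ 0) (hs₂ : s₂ ≠ 0)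
    (h1 : x₁ ^ p₁ * s₁ ^ p = x₂ ^ p₁ * s₂ ^ p)
    (h2 : x₁ ^ q₁ * s₁ ^ q = x₂ ^ q₁ * s₂ ^ q) :
    x₁ = x₂ ∧ s₁ = s₂ := by
  have key1 : ∀ x s : ℂ, x * (x ^ p₁ * s ^ p) ^ q = (x ^ q₁ * s ^ q) ^ p := by
    intro x s
    rw [mul_pow, mul_pow, ← pow_mul, ← pow_mul, ← pow_mul, ← pow_mul,
      show q₁ * p = p₁ * q + 1 by rw [mul_comm q₁ p, mul_comm p₁ q]; exact hA, pow_succ]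
    ring
  have key2 : ∀ x s : ℂ, s * (x ^ q₁ * s ^ q) ^ p₁ = (x ^ p₁ * s ^ p) ^ q₁ := by
    intro x s
    rw [mul_pow, mul_pow, ← pow_mul, ← pow_mul, ← pow_mul, ← pow_mul,
      show p * q₁ = q * p₁ + 1 from hA, pow_succ]
    ring
  constructor
  · have e1 := key1 x₁ s₁
    rw [h1, h2, ← key1 x₂ s₂] at e1
    exact mul_right_cancel₀ (pow_ne_zero _ (mul_ne_zero (pow_ne_zero _ hx₂) (pow_ne_zero _ hs₂))) e1
  · have e1 := key2 x₁ s₁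
    rw [h1, h2, ← key2 x₂ s₂] at e1
    exact mul_right_cancel₀ (pow_ne_zero _ (mul_ne_zero (pow_ne_zero _ hx₂) (pow_ne_zero _ hs₂))) e1

lemma mono_surj (p q p₁ q₁ : ℕ) (hA : p * q₁ = q * p₁ + 1)
    {u v : ℂ} (hu : u ≠ 0) (hv : v ≠ 0) :
    ∃ x s : ℂ, x ≠ 0 ∧ s ≠ 0 ∧ x ^ p₁ * s ^ p = u ∧ x ^ q₁ * s ^ q = v := by
  refine ⟨v ^ p / u ^ q, u ^ q₁ / v ^ p₁, ?_, ?_, ?_, ?_⟩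
  · exact div_ne_zero (pow_ne_zero _ hv) (pow_ne_zero _ hu)
  · exact div_ne_zero (pow_ne_zero _ hu) (pow_ne_zero _ hv)
  · rw [div_pow, div_pow, div_mul_div_comm, ← pow_mul, ← pow_mul, ← pow_mul, ← pow_mul,
      div_eq_iff (mul_ne_zero (pow_ne_zero _ hu) (pow_ne_zero _ hv)),
      show q₁ * p = q * p₁ + 1 by rw [mul_comm q₁ p]; exact hA, pow_succ]
    ring
  · rw [div_pow, div_pow, div_mul_div_comm, ← pow_mul, ← pow_mul, ← pow_mul, ← pow_mul,
      div_eq_iff (mul_ne_zero (pow_ne_zero _ hu) (pow_ne_zero _ hv)),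
      show p * q₁ = q * p₁ + 1 from hA, pow_succ]
    ring

/-- `Φ₂ = (f₂, g)` is a bijection from
`U = {(x,y) : x ≠ 0, s(x,y) ≠ 0, g(x,y) ≠ βᵢ ∀i}` onto
`V₂ = {(t,v) : t ≠ 0, v ≠ 0, v ≠ βᵢ ∀i}`; in particular `(f₂, g)` is a
birational morphism of `ℂ²`, i.e. `f₂` is a good field generator. -/
theorem stmt3 (k : ℕ) (hk : 1 ≤ k) (P : Polynomial ℂ) (hP : P.degree < (k : WithBot ℕ))
    (p q p₁ q₁ : ℕ) (hq₁ : q₁ < q) (hp₁ : p₁ < p)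
    (huni : (p : ℤ) * q₁ - (q : ℤ) * p₁ = 1 ∨ (p : ℤ) * q₁ - (q : ℤ) * p₁ = -1)
    (r : ℕ) (hr : 1 ≤ r)
    (a : Fin (r - 1) → ℕ) (ha : ∀ i, 0 < a i)
    (β : Fin (r - 1) → ℂ) (hβinj : Function.Injective β) (hβ0 : ∀ i, β i ≠ 0) :
    Set.BijOn (fun v : ℂ × ℂ => (f2Fun k p q p₁ q₁ r P a β v, gFun k q q₁ P v))
      {v : ℂ × ℂ | v.1 ≠ 0 ∧ sFun k P v ≠ 0 ∧ ∀ i, gFun k q q₁ P v ≠ β i}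
      {w : ℂ × ℂ | w.1 ≠ 0 ∧ w.2 ≠ 0 ∧ ∀ i, w.2 ≠ β i} := by
  have hAB : p * q₁ = q * p₁ + 1 ∨ q * p₁ = p * q₁ + 1 := by
    rcases huni with h | h
    · left
      have : ((p * q₁ : ℕ) : ℤ) = ((q * p₁ + 1 : ℕ) : ℤ) := by push_cast; linarith
      exact_mod_cast this
    · right
      have : ((q * p₁ : ℕ) : ℤ) = ((p * q₁ + 1 : ℕ) : ℤ) := by push_cast; linarith
      exact_mod_cast this
  refine ⟨?_, ?_, ?_⟩
  · -- MapsTo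
    rintro v ⟨hx, hs, hg⟩
    refine ⟨?_, mul_ne_zero (pow_ne_zero _ hx) (pow_ne_zero _ hs), hg⟩
    exact mul_ne_zero (mul_ne_zero (pow_ne_zero _ hx) (pow_ne_zero _ hs))
      (Finset.prod_ne_zero_iff.mpr fun i _ =>
        pow_ne_zero _ (sub_ne_zero.mpr (Ne.symm (hg i))))
  · -- InjOn
    rintro v₁ ⟨hx₁, hs₁, hg₁⟩ v₂ ⟨hx₂, hs₂, hg₂⟩ heq
    simp only [Prod.mk.injEq] at heq
    obtain ⟨hf, hg⟩ := heq
    have hC : (∏ i, (β i - gFun k q q₁ P v₁) ^ a i) ≠ 0 :=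
      Finset.prod_ne_zero_iff.mpr fun i _ => pow_ne_zero _ (sub_ne_zero.mpr (Ne.symm (hg₁ i)))
    have h1 : v₁.1 ^ p₁ * (sFun k P v₁) ^ p = v₂.1 ^ p₁ * (sFun k P v₂) ^ p := by
      have hf' : v₁.1 ^ p₁ * (sFun k P v₁) ^ p * (∏ i, (β i - gFun k q q₁ P v₁) ^ a i)
          = v₂.1 ^ p₁ * (sFun k P v₂) ^ p * (∏ i, (β i - gFun k q q₁ P v₁) ^ a i) := by
        have := hf
        simp only [f2Fun] at this
        rw [this, hg]
      exact mul_right_cancel₀ hC hf'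
    have h2 : v₁.1 ^ q₁ * (sFun k P v₁) ^ q = v₂.1 ^ q₁ * (sFun k P v₂) ^ q := hg
    have hxs : v₁.1 = v₂.1 ∧ sFun k P v₁ = sFun k P v₂ := by
      rcases hAB with hA | hB
      · exact mono_inj p q p₁ q₁ hA hx₂ hs₂ h1 h2
      · exact mono_inj q p q₁ p₁ hB hx₂ hs₂ h2 h1
    obtain ⟨hxx, hss⟩ := hxs
    have hy : v₁.2 = v₂.2 := by
      simp only [sFun, hxx] at hss
      exact mul_right_cancel₀ (pow_ne_zero k hx₂) (add_right_cancel hss)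
    exact Prod.ext hxx hy
  · -- SurjOn
    rintro w ⟨ht, hv, hβw⟩
    set c : ℂ := ∏ i, (β i - w.2) ^ a i with hc_def
    have hc : c ≠ 0 :=
      Finset.prod_ne_zero_iff.mpr fun i _ => pow_ne_zero _ (sub_ne_zero.mpr (Ne.symm (hβw i)))
    have hu : w.1 / c ≠ 0 := div_ne_zero ht hc
    obtain ⟨x, s, hx, hs, hxs1, hxs2⟩ :
        ∃ x s : ℂ, x ≠ 0 ∧ s ≠ 0 ∧ x ^ p₁ * s ^ p = w.1 / c ∧ x ^ q₁ * s ^ q = w.2 := by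
      rcases hAB with hA | hB
      · exact mono_surj p q p₁ q₁ hA hu hv
      · obtain ⟨x, s, hx, hs, e1, e2⟩ := mono_surj q p q₁ p₁ hB hv hu
        exact ⟨x, s, hx, hs, e2, e1⟩
    refine ⟨(x, (s - P.eval x) / x ^ k), ?_, ?_⟩
    · have hsv : sFun k P (x, (s - P.eval x) / x ^ k) = s := by
        simp only [sFun]
        field_simp
        ring
      have hgv : gFun k q q₁ P (x, (s - P.eval x) / x ^ k) = w.2 := by
        simp only [gFun, hsv]; exact hxs2
      exact ⟨hx, by rw [hsv]; exact hs, fun i => by rw [hgv]; exact hβw i⟩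
    · have hsv : sFun k P (x, (s - P.eval x) / x ^ k) = s := by
        simp only [sFun]
        field_simp
        ring
      have hgv : gFun k q q₁ P (x, (s - P.eval x) / x ^ k) = w.2 := by
        simp only [gFun, hsv]; exact hxs2
      have hfv : f2Fun k p q p₁ q₁ r P a β (x, (s - P.eval x) / x ^ k) = w.1 := by
        simp only [f2Fun, hsv, hgv, ← hc_def]
        rw [hxs1, div_mul_cancel₀ _ hc]
      exact Prod.ext hfv hgv
end

section
/- Let t ∈ ℂ be such that t ∉ {0, β₁, …, β_{r−1}} and t ≠ f₁(0, y) for every y ∈ ℂ. Then the map g restricts to a bijection from the fibre f₁⁻¹(t) = {(x,y) ∈ ℂ² : f₁(x,y) = t} onto ℂ ∖ ({0, t} ∪ {β₁, …, β_{r−1}}). (Thus the regular fibres of f₁ are rational curves with r+2 punctures, one of which moves with t; in particular f₁ is a rational polynomial and is not isotrivial.) -/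
lemma combo (z c : ℂ) (hz : z ≠ 0) (hc : c ≠ 0) (m n a m' n' b : ℤ) :
    (z ^ m * c ^ n) ^ a * (z ^ m' * c ^ n') ^ b
      = z ^ (m * a + m' * b) * c ^ (n * a + n' * b) := by
  rw [mul_zpow, mul_zpow, ← zpow_mul, ← zpow_mul, ← zpow_mul, ← zpow_mul,
    zpow_add₀ hz, zpow_add₀ hc]
  ring

lemma build_eq (p q p₁ q₁ : ℕ) (ε : ℤ) (hε : (p:ℤ) * q₁ - q * p₁ = ε) (hε2 : ε * ε = 1)
    (z c : ℂ) (hz : z ≠ 0) (hc : c ≠ 0) :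
    ((z ^ (p:ℤ) * c ^ (-(q:ℤ))) ^ ε) ^ q₁ * ((z ^ (-(p₁:ℤ)) * c ^ (q₁:ℤ)) ^ ε) ^ q = z ∧
    ((z ^ (p:ℤ) * c ^ (-(q:ℤ))) ^ ε) ^ p₁ * ((z ^ (-(p₁:ℤ)) * c ^ (q₁:ℤ)) ^ ε) ^ p = c := by
  constructor
  · rw [← zpow_natCast _ q₁, ← zpow_natCast _ q, ← zpow_mul, ← zpow_mul,
      combo z c hz hc]
    have e1 : (p:ℤ) * (ε * q₁) + (-(p₁:ℤ)) * (ε * q) = 1 := by linear_combination ε * hε + hε2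
    have e2 : (-(q:ℤ)) * (ε * q₁) + (q₁:ℤ) * (ε * q) = 0 := by ring
    rw [e1, e2, zpow_one, zpow_zero, mul_one]
  · rw [← zpow_natCast _ p₁, ← zpow_natCast _ p, ← zpow_mul, ← zpow_mul,
      combo z c hz hc]
    have e1 : (p:ℤ) * (ε * p₁) + (-(p₁:ℤ)) * (ε * p) = 0 := by ring
    have e2 : (-(q:ℤ)) * (ε * p₁) + (q₁:ℤ) * (ε * p) = 1 := by linear_combination ε * hε + hε2
    rw [e1, e2, zpow_one, zpow_zero, one_mul]

lemma unique_eq (p q p₁ q₁ : ℕ) (ε : ℤ) (hε : (p:ℤ) * q₁ - q * p₁ = ε) (hε2 : ε * ε = 1)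
    (x s : ℂ) (hx : x ≠ 0) (hs : s ≠ 0) :
    ((x ^ q₁ * s ^ q) ^ (p:ℤ) * (x ^ p₁ * s ^ p) ^ (-(q:ℤ))) ^ ε = x ∧
    ((x ^ q₁ * s ^ q) ^ (-(p₁:ℤ)) * (x ^ p₁ * s ^ p) ^ (q₁:ℤ)) ^ ε = s := by
  have hxq : x ^ q₁ * s ^ q = x ^ (q₁:ℤ) * s ^ (q:ℤ) := by rw [zpow_natCast, zpow_natCast]
  have hxp : x ^ p₁ * s ^ p = x ^ (p₁:ℤ) * s ^ (p:ℤ) := by rw [zpow_natCast, zpow_natCast]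
  constructor
  · rw [hxq, hxp, combo x s hx hs]
    have e1 : (q₁:ℤ) * p + (p₁:ℤ) * (-(q:ℤ)) = ε := by linear_combination hε
    have e2 : (q:ℤ) * p + (p:ℤ) * (-(q:ℤ)) = 0 := by ring
    rw [e1, e2, zpow_zero, mul_one, ← zpow_mul, hε2, zpow_one]
  · rw [hxq, hxp, combo x s hx hs]
    have e1 : (q₁:ℤ) * (-(p₁:ℤ)) + (p₁:ℤ) * (q₁:ℤ) = 0 := by ring
    have e2 : (q:ℤ) * (-(p₁:ℤ)) + (p:ℤ) * (q₁:ℤ) = ε := by linear_combination hε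
    rw [e1, e2, zpow_zero, one_mul, ← zpow_mul, hε2, zpow_one]

/-- For `t ∉ {0, β₁, …, β_{r−1}}` with `t ≠ f₁(0,y)` for all `y`, the map
`g` is a bijection from the fibre `f₁⁻¹(t)` onto `ℂ ∖ ({0, t} ∪ {β₁, …, β_{r−1}})`.
Thus the regular fibres of `f₁` are rational with `r+2` punctures, one moving with `t`;
in particular `f₁` is a non-isotrivial rational polynomial. -/
theorem stmt4 (k : ℕ) (hk : 1 ≤ k) (P : Polynomial ℂ) (hP : P.degree < (k : WithBot ℕ))
    (p q p₁ q₁ : ℕ) (hq₁ : q₁ < q) (hp₁ : p₁ < p)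
    (huni : (p : ℤ) * q₁ - (q : ℤ) * p₁ = 1 ∨ (p : ℤ) * q₁ - (q : ℤ) * p₁ = -1)
    (r : ℕ) (hr : 2 ≤ r)
    (a : Fin (r - 1) → ℕ) (ha : ∀ i, 0 < a i)
    (β : Fin (r - 1) → ℂ) (hβinj : Function.Injective β) (hβ0 : ∀ i, β i ≠ 0)
    (t : ℂ) (ht0 : t ≠ 0) (htβ : ∀ i, t ≠ β i)
    (htf : ∀ y : ℂ, t ≠ f1Fun k p q p₁ q₁ r P a β (0, y)) :
    Set.BijOn (gFun k q q₁ P)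
      {v : ℂ × ℂ | f1Fun k p q p₁ q₁ r P a β v = t}
      {z : ℂ | z ≠ 0 ∧ z ≠ t ∧ ∀ i, z ≠ β i} := by
  obtain ⟨ε, hε, hε2⟩ : ∃ ε : ℤ, (p:ℤ) * q₁ - q * p₁ = ε ∧ ε * ε = 1 := by
    rcases huni with h | h
    · exact ⟨1, h, by norm_num⟩
    · exact ⟨-1, h, by norm_num⟩
  have hq0 : q ≠ 0 := (Nat.lt_of_le_of_lt (Nat.zero_le _) hq₁).ne'
  have hp0 : p ≠ 0 := (Nat.lt_of_le_of_lt (Nat.zero_le _) hp₁).ne'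
  have key : ∀ v : ℂ × ℂ, f1Fun k p q p₁ q₁ r P a β v = t →
      v.1 ≠ 0 ∧ sFun k P v ≠ 0 ∧ gFun k q q₁ P v ≠ 0 ∧ gFun k q q₁ P v ≠ t ∧
      (∀ i, gFun k q q₁ P v ≠ β i) ∧
      v.1 ^ p₁ * sFun k P v ^ p =
        (t - gFun k q q₁ P v) / ∏ i, (β i - gFun k q q₁ P v) ^ a i := by
    intro v hv
    have hx : v.1 ≠ 0 := by
      intro h
      exact htf v.2 (by rw [show ((0:ℂ), v.2) = v by exact Prod.ext h.symm rfl, hv])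
    have hs : sFun k P v ≠ 0 := by
      intro h
      apply ht0
      rw [← hv]
      simp [f1Fun, gFun, h, zero_pow hq0, zero_pow hp0]
    have hg0 : gFun k q q₁ P v ≠ 0 := mul_ne_zero (pow_ne_zero _ hx) (pow_ne_zero _ hs)
    have hgβ : ∀ i, gFun k q q₁ P v ≠ β i := by
      intro i h
      have hprod : (∏ j, (β j - gFun k q q₁ P v) ^ a j) = 0 :=
        Finset.prod_eq_zero (Finset.mem_univ i)
          (by rw [h, sub_self]; exact zero_pow (ha i).ne')
      rw [f1Fun, hprod, mul_zero, add_zero] at hv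
      exact htβ i (by rw [← hv, h])
    have hPr : (∏ i, (β i - gFun k q q₁ P v) ^ a i) ≠ 0 :=
      Finset.prod_ne_zero_iff.mpr fun i _ =>
        pow_ne_zero _ (sub_ne_zero.mpr fun e => hgβ i e.symm)
    have hgt : gFun k q q₁ P v ≠ t := by
      intro h
      have h2 : v.1 ^ p₁ * sFun k P v ^ p * ∏ i, (β i - gFun k q q₁ P v) ^ a i = 0 := by
        rw [f1Fun] at hv
        linear_combination hv - h
      exact (mul_ne_zero (mul_ne_zero (pow_ne_zero _ hx) (pow_ne_zero _ hs)) hPr) h2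
    refine ⟨hx, hs, hg0, hgt, hgβ, ?_⟩
    rw [eq_div_iff hPr]
    rw [f1Fun] at hv
    linear_combination hv
  refine ⟨?_, ?_, ?_⟩
  · intro v hv
    obtain ⟨_, _, hg0, hgt, hgβ, _⟩ := key v hv
    exact ⟨hg0, hgt, hgβ⟩
  · intro v hv w hw hgg
    obtain ⟨hxv, hsv, hg0, hgt, hgβ, hcv⟩ := key v hv
    obtain ⟨hxw, hsw, _, _, _, hcw⟩ := key w hw
    rw [← hgg] at hcw
    have u1 := unique_eq p q p₁ q₁ ε hε hε2 v.1 (sFun k P v) hxv hsv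
    have u2 := unique_eq p q p₁ q₁ ε hε hε2 w.1 (sFun k P w) hxw hsw
    have eg1 : v.1 ^ q₁ * sFun k P v ^ q = gFun k q q₁ P v := rfl
    have eg2 : w.1 ^ q₁ * sFun k P w ^ q = gFun k q q₁ P v := by rw [hgg]; rfl
    rw [eg1, hcv] at u1
    rw [eg2, hcw] at u2
    have hx12 : v.1 = w.1 := u1.1.symm.trans u2.1
    have hs12 : sFun k P v = sFun k P w := u1.2.symm.trans u2.2
    have hy : v.2 = w.2 := by
      have h1 : v.2 * v.1 ^ k = w.2 * v.1 ^ k := by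
        have := hs12
        rw [sFun, sFun, ← hx12] at this
        linear_combination this
      exact mul_right_cancel₀ (pow_ne_zero k hxv) h1
    exact Prod.ext hx12 hy
  · rintro z ⟨hz0, hzt, hzβ⟩
    have hPr : (∏ i, (β i - z) ^ a i) ≠ 0 :=
      Finset.prod_ne_zero_iff.mpr fun i _ =>
        pow_ne_zero _ (sub_ne_zero.mpr fun e => hzβ i e.symm)
    set c : ℂ := (t - z) / ∏ i, (β i - z) ^ a i with hcdef
    have hc : c ≠ 0 := div_ne_zero (sub_ne_zero.mpr (Ne.symm hzt)) hPr
    set x : ℂ := (z ^ (p:ℤ) * c ^ (-(q:ℤ))) ^ ε with hxdef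
    set s : ℂ := (z ^ (-(p₁:ℤ)) * c ^ (q₁:ℤ)) ^ ε with hsdef
    have hx : x ≠ 0 := zpow_ne_zero _ (mul_ne_zero (zpow_ne_zero _ hz0) (zpow_ne_zero _ hc))
    obtain ⟨hb1, hb2⟩ := build_eq p q p₁ q₁ ε hε hε2 z c hz0 hc
    refine ⟨(x, (s - P.eval x) / x ^ k), ?_, ?_⟩
    · have hsF : sFun k P (x, (s - P.eval x) / x ^ k) = s := by
        show (s - P.eval x) / x ^ k * x ^ k + P.eval x = s
        rw [div_mul_cancel₀ _ (pow_ne_zero k hx)]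
        ring
      have hg : gFun k q q₁ P (x, (s - P.eval x) / x ^ k) = z := by
        show x ^ q₁ * sFun k P (x, (s - P.eval x) / x ^ k) ^ q = z
        rw [hsF]
        exact hb1
      show f1Fun k p q p₁ q₁ r P a β (x, (s - P.eval x) / x ^ k) = t
      rw [f1Fun, hg, hsF]
      show z + x ^ p₁ * s ^ p * ∏ i, (β i - z) ^ a i = t
      rw [hb2, hcdef, div_mul_cancel₀ _ hPr]
      ring
    · have hsF : sFun k P (x, (s - P.eval x) / x ^ k) = s := by
        show (s - P.eval x) / x ^ k * x ^ k + P.eval x = s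
        rw [div_mul_cancel₀ _ (pow_ne_zero k hx)]
        ring
      show x ^ q₁ * sFun k P (x, (s - P.eval x) / x ^ k) ^ q = z
      rw [hsF]
      exact hb1
end

section
/- Regarded as a polynomial in the two variables x and y over ℂ (e.g. as an element of MvPolynomial (Fin 2) ℂ), the polynomial f₁ has total degree A·(q₁ + q·(k+1)) + p₁ + p·(k+1). (This is the degree formula deg f = A(Q+q) + P + p of the classification theorem, rewritten in the normal-form variables.) -/
open MvPolynomial

/-- `s = y·x^k + P(x)` as a polynomial in the two variables `x = X 0`, `y = X 1`. -/
noncomputable def sPoly (k : ℕ) (P : Polynomial ℂ) : MvPolynomial (Fin 2) ℂ :=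
  X 1 * X 0 ^ k + Polynomial.aeval (X 0 : MvPolynomial (Fin 2) ℂ) P

/-- `g = x^{q₁}·s^q` as a two-variable polynomial. -/
noncomputable def gPoly (k q q₁ : ℕ) (P : Polynomial ℂ) : MvPolynomial (Fin 2) ℂ :=
  X 0 ^ q₁ * sPoly k P ^ q

/-- `f₁ = g + x^{p₁}·s^p·∏ᵢ(βᵢ − g)^{aᵢ}` as a two-variable polynomial (first normal
form, the non-isotrivial case). -/
noncomputable def f1Poly (k p q p₁ q₁ r : ℕ) (P : Polynomial ℂ)
    (a : Fin (r - 1) → ℕ) (β : Fin (r - 1) → ℂ) : MvPolynomial (Fin 2) ℂ :=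
  gPoly k q q₁ P +
    X 0 ^ p₁ * sPoly k P ^ p * ∏ i, (C (β i) - gPoly k q q₁ P) ^ a i

lemma aux_aeval_td_le (P : Polynomial ℂ) :
    (Polynomial.aeval (X 0 : MvPolynomial (Fin 2) ℂ) P).totalDegree ≤ P.natDegree := by
  rw [Polynomial.aeval_def, Polynomial.eval₂_eq_sum, Polynomial.sum]
  refine (totalDegree_finset_sum _ _).trans (Finset.sup_le fun n hn => ?_)
  refine (totalDegree_mul _ _).trans ?_
  have h1 : (algebraMap ℂ (MvPolynomial (Fin 2) ℂ) (P.coeff n)).totalDegree = 0 :=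
    totalDegree_C _
  have h2 : ((X 0 : MvPolynomial (Fin 2) ℂ) ^ n).totalDegree ≤ n := by
    rw [totalDegree_X_pow]
  calc (algebraMap ℂ (MvPolynomial (Fin 2) ℂ) (P.coeff n)).totalDegree +
        ((X 0 : MvPolynomial (Fin 2) ℂ) ^ n).totalDegree
      ≤ 0 + n := add_le_add (le_of_eq h1) h2
    _ ≤ P.natDegree := by simpa using Polynomial.le_natDegree_of_mem_supp _ hn

/-- the polynomial `f₁` has total degree
`A·(q₁ + q·(k+1)) + p₁ + p·(k+1)` where `A = a₁ + ⋯ + a_{r−1}`.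
(This is the degree formula `deg f = A(Q+q) + P + p` in normal-form variables.) -/
theorem stmt6 (k : ℕ) (hk : 1 ≤ k) (P : Polynomial ℂ) (hP : P.degree < (k : WithBot ℕ))
    (p q p₁ q₁ : ℕ) (hq₁ : q₁ < q) (hp₁ : p₁ < p)
    (huni : (p : ℤ) * q₁ - (q : ℤ) * p₁ = 1 ∨ (p : ℤ) * q₁ - (q : ℤ) * p₁ = -1)
    (r : ℕ) (hr : 2 ≤ r)
    (a : Fin (r - 1) → ℕ) (ha : ∀ i, 0 < a i)
    (β : Fin (r - 1) → ℂ) (hβinj : Function.Injective β) (hβ0 : ∀ i, β i ≠ 0) :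
    (f1Poly k p q p₁ q₁ r P a β).totalDegree =
      (∑ i, a i) * (q₁ + q * (k + 1)) + p₁ + p * (k + 1) := by
  have hPnat : P.natDegree ≤ k := Polynomial.natDegree_le_iff_degree_le.2 hP.le
  have hq : 1 ≤ q := Nat.lt_of_le_of_lt (Nat.zero_le q₁) hq₁
  have hp : 1 ≤ p := Nat.lt_of_le_of_lt (Nat.zero_le p₁) hp₁
  have hr1 : 0 < r - 1 := by omega
  have hA1 : 1 ≤ ∑ i, a i := by
    calc 1 ≤ a ⟨0, hr1⟩ := ha _
      _ ≤ ∑ i, a i := Finset.single_le_sum (fun i _ => Nat.zero_le _) (Finset.mem_univ _)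
  set A := ∑ i, a i with hA
  set D1 := q₁ + q * (k + 1) with hD1
  -- upper bound
  have hsle : (sPoly k P).totalDegree ≤ k + 1 := by
    refine (totalDegree_add _ _).trans (max_le ?_ ?_)
    · refine (totalDegree_mul _ _).trans ?_
      rw [totalDegree_X, totalDegree_X_pow]
      omega
    · exact (aux_aeval_td_le P).trans (hPnat.trans (by omega))
  have hgle : (gPoly k q q₁ P).totalDegree ≤ D1 := by
    refine (totalDegree_mul _ _).trans ?_
    rw [totalDegree_X_pow]
    exact add_le_add le_rfl ((totalDegree_pow _ _).trans (Nat.mul_le_mul le_rfl hsle))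
  have hfacle : ∀ i, ((C (β i) - gPoly k q q₁ P) ^ a i).totalDegree ≤ a i * D1 := by
    intro i
    refine (totalDegree_pow _ _).trans (Nat.mul_le_mul le_rfl ?_)
    refine (totalDegree_sub _ _).trans ?_
    rw [totalDegree_C]
    simpa using hgle
  have hupper : (f1Poly k p q p₁ q₁ r P a β).totalDegree ≤ A * D1 + p₁ + p * (k + 1) := by
    refine (totalDegree_add _ _).trans (max_le ?_ ?_)
    · calc (gPoly k q q₁ P).totalDegree ≤ D1 := hgle
        _ ≤ A * D1 := Nat.le_mul_of_pos_left _ hA1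
        _ ≤ A * D1 + p₁ + p * (k + 1) := by omega
    · refine (totalDegree_mul _ _).trans ?_
      have h1 : ((X 0 : MvPolynomial (Fin 2) ℂ) ^ p₁ * sPoly k P ^ p).totalDegree
          ≤ p₁ + p * (k + 1) := by
        refine (totalDegree_mul _ _).trans ?_
        rw [totalDegree_X_pow]
        exact add_le_add le_rfl ((totalDegree_pow _ _).trans (Nat.mul_le_mul le_rfl hsle))
      have h2 : (∏ i, (C (β i) - gPoly k q q₁ P) ^ a i).totalDegree ≤ A * D1 := by
        refine (totalDegree_finset_prod _ _).trans ?_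
        rw [hA, Finset.sum_mul]
        exact Finset.sum_le_sum fun i _ => hfacle i
      calc _ ≤ (p₁ + p * (k + 1)) + A * D1 := add_le_add h1 h2
        _ = A * D1 + p₁ + p * (k + 1) := by ring
  -- lower bound via the substitution x ↦ X, y ↦ X into one-variable polynomials
  set φ : MvPolynomial (Fin 2) ℂ →ₐ[ℂ] Polynomial ℂ :=
    MvPolynomial.aeval (fun _ : Fin 2 => (Polynomial.X : Polynomial ℂ)) with hφ
  set S : Polynomial ℂ := Polynomial.X ^ (k + 1) + P with hS
  set G : Polynomial ℂ := Polynomial.X ^ q₁ * S ^ q with hG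
  set T : Polynomial ℂ :=
    Polynomial.X ^ p₁ * S ^ p * ∏ i, (Polynomial.C (β i) - G) ^ a i with hT
  have hφs : φ (sPoly k P) = S := by
    rw [sPoly, map_add, map_mul, map_pow, hφ]
    rw [MvPolynomial.aeval_X, MvPolynomial.aeval_X]
    rw [← Polynomial.aeval_algHom_apply, MvPolynomial.aeval_X, Polynomial.aeval_X_left_apply]
    rw [hS, pow_succ]
    ring
  have hφg : φ (gPoly k q q₁ P) = G := by
    rw [gPoly, map_mul, map_pow, map_pow, hφs, MvPolynomial.aeval_X]
  have hφC : ∀ c : ℂ, φ (C c) = Polynomial.C c := by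
    intro c
    rw [hφ, MvPolynomial.aeval_C, Polynomial.algebraMap_eq]
  have hφf : φ (f1Poly k p q p₁ q₁ r P a β) = G + T := by
    rw [f1Poly, map_add, map_mul, map_mul, map_pow, map_pow, hφs, hφg, map_prod]
    congr 1
    rw [hT, MvPolynomial.aeval_X]
    congr 1
    refine Finset.prod_congr rfl fun i _ => ?_
    rw [map_pow, map_sub, hφC, hφg]
  -- one-variable degree computations
  have hSdeg : S.degree = ((k + 1 : ℕ) : WithBot ℕ) := by
    rw [hS, Polynomial.degree_add_eq_left_of_degree_lt, Polynomial.degree_X_pow]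
    rw [Polynomial.degree_X_pow]
    exact hP.trans_le (by exact_mod_cast Nat.le_succ k)
  have hS0 : S ≠ 0 := by
    intro h
    rw [h, Polynomial.degree_zero] at hSdeg
    exact absurd hSdeg.symm (WithBot.natCast_ne_bot _)
  have hSnat : S.natDegree = k + 1 := Polynomial.natDegree_eq_of_degree_eq_some hSdeg
  have hG0 : G ≠ 0 := mul_ne_zero (pow_ne_zero _ Polynomial.X_ne_zero) (pow_ne_zero _ hS0)
  have hGnat : G.natDegree = D1 := by
    rw [hG, Polynomial.natDegree_mul (pow_ne_zero _ Polynomial.X_ne_zero) (pow_ne_zero _ hS0),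
      Polynomial.natDegree_pow, Polynomial.natDegree_pow, Polynomial.natDegree_X, hSnat, hD1]
    ring
  have hGpos : 0 < G.natDegree := by
    rw [hGnat, hD1]
    have : 1 ≤ q * (k + 1) := Nat.mul_pos hq (Nat.succ_pos k)
    omega
  have hfacnat : ∀ i, (Polynomial.C (β i) - G).natDegree = G.natDegree := by
    intro i
    rw [sub_eq_add_neg, Polynomial.natDegree_add_eq_right_of_natDegree_lt, Polynomial.natDegree_neg]
    rw [Polynomial.natDegree_neg, Polynomial.natDegree_C]
    exact hGpos
  have hfac0 : ∀ i, Polynomial.C (β i) - G ≠ 0 := by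
    intro i h
    have := hfacnat i
    rw [h, Polynomial.natDegree_zero] at this
    omega
  have hprod0 : (∏ i, (Polynomial.C (β i) - G) ^ a i) ≠ 0 :=
    Finset.prod_ne_zero_iff.2 fun i _ => pow_ne_zero _ (hfac0 i)
  have hTnat : T.natDegree = p₁ + p * (k + 1) + A * D1 := by
    rw [hT, Polynomial.natDegree_mul
        (mul_ne_zero (pow_ne_zero _ Polynomial.X_ne_zero) (pow_ne_zero _ hS0)) hprod0,
      Polynomial.natDegree_mul (pow_ne_zero _ Polynomial.X_ne_zero) (pow_ne_zero _ hS0),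
      Polynomial.natDegree_pow, Polynomial.natDegree_pow, Polynomial.natDegree_X, hSnat,
      Polynomial.natDegree_prod _ _ (fun i _ => pow_ne_zero _ (hfac0 i))]
    have : ∑ i, ((Polynomial.C (β i) - G) ^ a i).natDegree = A * D1 := by
      rw [hA, Finset.sum_mul]
      refine Finset.sum_congr rfl fun i _ => ?_
      rw [Polynomial.natDegree_pow, hfacnat i, hGnat]
    rw [this]
    ring
  have hGT : G.natDegree < T.natDegree := by
    rw [hGnat, hTnat]
    have h1 : D1 ≤ A * D1 := Nat.le_mul_of_pos_left _ hA1
    have h2 : 1 ≤ p * (k + 1) := Nat.mul_pos hp (Nat.succ_pos k)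
    calc D1 ≤ A * D1 := h1
      _ < p₁ + p * (k + 1) + A * D1 := by
        refine lt_add_of_pos_left _ ?_
        omega
  have hlower : p₁ + p * (k + 1) + A * D1 ≤ (f1Poly k p q p₁ q₁ r P a β).totalDegree := by
    have h := MvPolynomial.aeval_natDegree_le (f1Poly k p q p₁ q₁ r P a β) le_rfl
      (fun _ : Fin 2 => (Polynomial.X : Polynomial ℂ)) (fun _ => Polynomial.natDegree_X.le)
    rw [mul_one] at h
    have heq : (φ (f1Poly k p q p₁ q₁ r P a β)).natDegree = p₁ + p * (k + 1) + A * D1 := by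
      rw [hφf, Polynomial.natDegree_add_eq_right_of_natDegree_lt hGT, hTnat]
    rw [hφ] at heq
    rw [heq] at h
    exact h
  have : (f1Poly k p q p₁ q₁ r P a β).totalDegree = A * D1 + p₁ + p * (k + 1) :=
    le_antisymm hupper (by omega)
  rw [this]
end

section
/- Assume additionally p·q₁ − q·p₁ = +1, and write P(x) = α₀ + α₁x + ⋯ + α_{k−1}x^{k−1}, so that f₁ = f_{α,β} depends on the parameters α = (α₀,…,α_{k−1}) and β = (β₁,…,β_{r−1}). Set B = A·q + p − q and C = (A−1)·(q₁ + q·k) + p₁ + p·k. Then for every λ ∈ ℂ with λ ≠ 0 and all (x,y) ∈ ℂ²: λ⁻¹·f_{α,β}(λ^B·x, λ^{−C}·y) = f_{α′,β′}(x,y), where α′_j = λ^{(j−k)·B + C}·α_j for j = 0,…,k−1 and β′_i = λ⁻¹·β_i for i = 1,…,r−1 (note that β′₁,…,β′_{r−1} are again pairwise distinct and nonzero, so f_{α′,β′} belongs to the same normal-form family). (This rescaling action accounts for the one-dimensional redundancy of the parameters (α,β) over the moduli space of such polynomials.) -/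
/-- `s(x,y) = y·x^k + α₀ + α₁x + ⋯ + α_{k−1}x^{k−1}`, with the coefficient
parameters `α` made explicit. -/
noncomputable def sParam (k : ℕ) (α : Fin k → ℂ) (v : ℂ × ℂ) : ℂ :=
  v.2 * v.1 ^ k + ∑ j, α j * v.1 ^ (j : ℕ)

/-- `f_{α,β}(x,y) = x^{q₁}s^q + x^{p₁}s^p·∏ᵢ(βᵢ − x^{q₁}s^q)^{aᵢ}` (first normal
form, with parameters `α`, `β` made explicit). -/
noncomputable def f1Param (k p q p₁ q₁ r : ℕ) (a : Fin (r - 1) → ℕ)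
    (α : Fin k → ℂ) (β : Fin (r - 1) → ℂ) (v : ℂ × ℂ) : ℂ :=
  v.1 ^ q₁ * sParam k α v ^ q +
    v.1 ^ p₁ * sParam k α v ^ p *
      ∏ i, (β i - v.1 ^ q₁ * sParam k α v ^ q) ^ a i

/-- with `A = ∑aᵢ`, `B = A·q + p − q`, `C = (A−1)·(q₁ + q·k) + p₁ + p·k`,
for every `λ ≠ 0` one has `λ⁻¹·f_{α,β}(λ^B·x, λ^{−C}·y) = f_{α′,β′}(x,y)` where
`α′_j = λ^{(j−k)B + C}·α_j` and `β′_i = λ⁻¹·βᵢ`.  This rescaling accounts for the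
one-dimensional redundancy of the parameters `(α,β)` over the moduli space. -/
theorem stmt9 (k : ℕ) (hk : 1 ≤ k)
    (p q p₁ q₁ : ℕ) (hq₁ : q₁ < q) (hp₁ : p₁ < p)
    (huni : (p : ℤ) * q₁ - (q : ℤ) * p₁ = 1)
    (r : ℕ) (hr : 2 ≤ r)
    (a : Fin (r - 1) → ℕ) (ha : ∀ i, 0 < a i)
    (α : Fin k → ℂ)
    (β : Fin (r - 1) → ℂ) (hβinj : Function.Injective β) (hβ0 : ∀ i, β i ≠ 0)
    (A B C : ℕ) (hA : A = ∑ i, a i) (hB : B = A * q + p - q)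
    (hC : C = (A - 1) * (q₁ + q * k) + p₁ + p * k) :
    ∀ lam : ℂ, lam ≠ 0 → ∀ x y : ℂ,
      lam⁻¹ * f1Param k p q p₁ q₁ r a α β (lam ^ B * x, lam ^ (-(C : ℤ)) * y) =
        f1Param k p q p₁ q₁ r a
          (fun j => lam ^ ((((j : ℕ) : ℤ) - (k : ℤ)) * (B : ℤ) + (C : ℤ)) * α j)
          (fun i => lam⁻¹ * β i) (x, y) := by
  intro lam hlam x y
  have hApos : 0 < A := by
    rw [hA]
    apply Finset.sum_pos (fun i _ => ha i)
    have : Nonempty (Fin (r - 1)) := ⟨⟨0, by omega⟩⟩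
    exact Finset.univ_nonempty
  have hBZ : (B : ℤ) = (A : ℤ) * q + p - q := by
    have hq' : q ≤ A * q + p := le_add_right (Nat.le_mul_of_pos_left q hApos)
    rw [hB, Nat.cast_sub hq']; push_cast; ring
  have hCZ : (C : ℤ) = ((A : ℤ) - 1) * (q₁ + q * k) + p₁ + p * k := by
    rw [hC, Nat.cast_add, Nat.cast_add, Nat.cast_mul, Nat.cast_sub hApos]
    push_cast; ring
  set e : ℤ := (B : ℤ) * k - C with he
  have hg : (B : ℤ) * q₁ + q * e = 1 := by
    rw [he, hBZ, hCZ]; linear_combination huni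
  have hp2 : (B : ℤ) * p₁ + p * e = 1 - A := by
    rw [he, hBZ, hCZ]; linear_combination (1 - (A : ℤ)) * huni
  set s' : ℂ := sParam k
      (fun j => lam ^ ((((j : ℕ) : ℤ) - (k : ℤ)) * (B : ℤ) + (C : ℤ)) * α j) (x, y) with hs'
  have hs : sParam k α (lam ^ B * x, lam ^ (-(C : ℤ)) * y) = lam ^ e * s' := by
    rw [hs']
    simp only [sParam]
    rw [mul_add, Finset.mul_sum]
    congr 1
    · rw [mul_pow, ← zpow_natCast lam B, ← zpow_natCast (lam ^ (B : ℤ)) k, ← zpow_mul,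
        show e = -(C : ℤ) + (B : ℤ) * k by ring, zpow_add₀ hlam]
      ring
    · apply Finset.sum_congr rfl
      intro j _
      rw [mul_pow, ← zpow_natCast lam B, ← zpow_natCast (lam ^ (B : ℤ)) (j : ℕ), ← zpow_mul,
        show (B : ℤ) * ((j : ℕ) : ℤ) = e + ((((j : ℕ) : ℤ) - (k : ℤ)) * (B : ℤ) + (C : ℤ)) by ring,
        zpow_add₀ hlam]
      ring
  simp only [f1Param, hs]
  rw [← hs']
  have hfac : ∀ m n : ℕ, (lam ^ B * x) ^ m * (lam ^ e * s') ^ n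
      = lam ^ ((B : ℤ) * m + n * e) * (x ^ m * s' ^ n) := by
    intro m n
    rw [mul_pow, mul_pow, ← pow_mul, ← zpow_natCast lam (B * m),
      ← zpow_natCast (lam ^ e) n, ← zpow_mul,
      show (B : ℤ) * m + n * e = ((B * m : ℕ) : ℤ) + e * n by push_cast; ring,
      zpow_add₀ hlam]
    ring
  rw [hfac q₁ q, hfac p₁ p, hg, hp2, zpow_one]
  set g' : ℂ := x ^ q₁ * s' ^ q with hg'
  have hprod : ∏ i, (β i - lam * g') ^ a i
      = lam ^ A * ∏ i, (lam⁻¹ * β i - g') ^ a i := by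
    rw [hA, ← Finset.prod_pow_eq_pow_sum, ← Finset.prod_mul_distrib]
    apply Finset.prod_congr rfl
    intro i _
    rw [← mul_pow]
    congr 1
    field_simp
  rw [hprod]
  have hcomb : lam ^ ((1 : ℤ) - A) * lam ^ A = lam := by
    rw [← zpow_natCast lam A, ← zpow_add₀ hlam]; simp
  rw [mul_add, ← mul_assoc, inv_mul_cancel₀ hlam, one_mul]
  congr 1
  calc lam⁻¹ * (lam ^ ((1 : ℤ) - A) * (x ^ p₁ * s' ^ p) * (lam ^ A * ∏ i, (lam⁻¹ * β i - g') ^ a i))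
      = lam⁻¹ * ((lam ^ ((1 : ℤ) - A) * lam ^ A) * ((x ^ p₁ * s' ^ p) * ∏ i, (lam⁻¹ * β i - g') ^ a i)) := by ring
    _ = _ := by rw [hcomb, ← mul_assoc, inv_mul_cancel₀ hlam, one_mul]
end

section
/- Let k ≥ 1 be an integer, a₀, …, a_{k−1} ∈ ℂ, set s(x,y) = a₀ + a₁x + ⋯ + a_{k−1}x^{k−1} + x^k·y, and define f(x,y) = x + s(x,y)². Then for every t ∈ ℂ with t ≠ a₀², the map (x,y) ↦ s(x,y) restricts to a bijection from the fibre f⁻¹(t) = {(x,y) ∈ ℂ² : f(x,y) = t} onto {z ∈ ℂ : z² ≠ t}. (So the regular fibres of f are twice-punctured planes, i.e. isomorphic to ℂ ∖ {0,1}; f is the rational polynomial, not of simple type, with one degree-one and one degree-two horizontal curve occurring in the classification of polynomials with general fibre ℂ ∖ {0,1}.) -/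
/-- for `s(x,y) = a₀ + a₁x + ⋯ + a_{k−1}x^{k−1} + x^k·y` and
`f(x,y) = x + s(x,y)²`, and any `t ≠ a₀²`, the map `(x,y) ↦ s(x,y)` is a bijection
from the fibre `f⁻¹(t)` onto `{z ∈ ℂ : z² ≠ t}`.  So the regular fibres of `f` are
twice-punctured planes, i.e. isomorphic to `ℂ ∖ {0,1}`. -/
theorem stmt11 (k : ℕ) (hk : 1 ≤ k) (a : Fin k → ℂ)
    (t : ℂ) (ht : t ≠ (a ⟨0, hk⟩) ^ 2) :
    Set.BijOn (fun v : ℂ × ℂ => (∑ j, a j * v.1 ^ (j : ℕ)) + v.1 ^ k * v.2)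
      {v : ℂ × ℂ | v.1 + ((∑ j, a j * v.1 ^ (j : ℕ)) + v.1 ^ k * v.2) ^ 2 = t}
      {z : ℂ | z ^ 2 ≠ t} := by
  set s : ℂ × ℂ → ℂ := fun v => (∑ j, a j * v.1 ^ (j : ℕ)) + v.1 ^ k * v.2 with hs
  have hzero : ∀ x y : ℂ, x = 0 → s (x, y) = a ⟨0, hk⟩ := by
    intro x y hx0
    simp only [hs, hx0]
    rw [zero_pow (by omega), zero_mul, add_zero]
    rw [Finset.sum_eq_single (⟨0, hk⟩ : Fin k)]
    · simp
    · intro j _ hj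
      have hj0 : (j : ℕ) ≠ 0 := by
        intro h; apply hj; exact Fin.ext h
      rw [zero_pow hj0, mul_zero]
    · simp
  have hxne : ∀ v : ℂ × ℂ, v.1 + s v ^ 2 = t → v.1 ≠ 0 := by
    intro v hv h0
    apply ht
    have hsv : s v = a ⟨0, hk⟩ := by
      have : v = (v.1, v.2) := rfl
      rw [this]; exact hzero v.1 v.2 h0
    rw [← hsv]
    linear_combination -hv + h0
  refine ⟨?_, ?_, ?_⟩
  · intro v hv
    simp only [Set.mem_setOf_eq] at hv ⊢
    intro h
    exact hxne v hv (by linear_combination hv - h)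
  · intro v hv w hw heq
    simp only [Set.mem_setOf_eq] at hv hw
    have heq' : s v = s w := heq
    have hv' : v.1 + s v ^ 2 = t := hv
    have hw' : w.1 + s w ^ 2 = t := hw
    have hx : v.1 = w.1 := by linear_combination hv' - hw' - (s v + s w) * heq'
    have hvx := hxne v hv
    have hy : v.2 = w.2 := by
      have h1 : v.1 ^ k * v.2 = v.1 ^ k * w.2 := by
        have : (∑ j, a j * v.1 ^ (j : ℕ)) + v.1 ^ k * v.2
            = (∑ j, a j * w.1 ^ (j : ℕ)) + w.1 ^ k * w.2 := heq'
        rw [← hx] at this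
        linear_combination this
      exact mul_left_cancel₀ (pow_ne_zero k hvx) h1
    exact Prod.ext hx hy
  · intro z hz
    simp only [Set.mem_setOf_eq] at hz
    have hxne0 : t - z ^ 2 ≠ 0 := sub_ne_zero.mpr (Ne.symm hz)
    refine ⟨(t - z ^ 2, (z - ∑ j, a j * (t - z ^ 2) ^ (j : ℕ)) / (t - z ^ 2) ^ k), ?_, ?_⟩
    · simp only [Set.mem_setOf_eq, hs]
      rw [mul_div_cancel₀ _ (pow_ne_zero k hxne0)]
      ring
    · simp only [hs]
      rw [mul_div_cancel₀ _ (pow_ne_zero k hxne0)]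
      ring
end

section
/- The group homomorphism from the free group on r generators x₁, …, x_r to B_{r+1} determined by xᵢ ↦ hᵢ (i = 1, …, r) is injective. (That is, the local monodromies h₁, …, h_r freely generate a free subgroup of rank r in the braid group B_{r+1}.) -/
/-- The Artin relations for the braid group on `r+1` strands, with generators
`σ₁, …, σ_r` indexed by `Fin r`: `σᵢσⱼ = σⱼσᵢ` for `|i−j| ≥ 2` and
`σᵢσᵢ₊₁σᵢ = σᵢ₊₁σᵢσᵢ₊₁`. -/
def braidRels (r : ℕ) : Set (FreeGroup (Fin r)) :=
  {w | ∃ i j : Fin r, (i : ℕ) + 2 ≤ (j : ℕ) ∧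
      w = FreeGroup.of i * FreeGroup.of j * (FreeGroup.of j * FreeGroup.of i)⁻¹} ∪
  {w | ∃ i j : Fin r, (i : ℕ) + 1 = (j : ℕ) ∧
      w = FreeGroup.of i * FreeGroup.of j * FreeGroup.of i *
        (FreeGroup.of j * FreeGroup.of i * FreeGroup.of j)⁻¹}

/-- The braid group `B_{r+1}` on `r+1` strands, as a presented group. -/
abbrev BraidGroup (r : ℕ) : Type := PresentedGroup (braidRels r)

/-- The standard generator `σ_{j+1}` of `B_{r+1}` (0-indexed: `braidSigma r j` is the
Artin generator exchanging the `j`-th and `(j+1)`-st punctures), extended by `1`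
for out-of-range indices. -/
noncomputable def braidSigma (r : ℕ) (j : ℕ) : BraidGroup r :=
  if h : j < r then PresentedGroup.of ⟨j, h⟩ else 1

/-- The local monodromy `h_{i+1} = (σ₁⋯σᵢ)·σ_{i+1}²·(σ₁⋯σᵢ)⁻¹` (0-indexed:
`braidH r i` is the paper's `h_{i+1}`, so `braidH r 0 = σ₁²`). -/
noncomputable def braidH (r : ℕ) (i : ℕ) : BraidGroup r :=
  ((List.range i).map (braidSigma r)).prod * (braidSigma r i) ^ 2 *
    (((List.range i).map (braidSigma r)).prod)⁻¹

set_option linter.unusedVariables false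


namespace Stmt12Aux

variable {r : ℕ}

/-- Target free group on the `r+1` punctures. -/
abbrev FF (r : ℕ) := FreeGroup (Fin (r+1))

/-- The Artin substitution for `σ_j`. -/
def sigA (j : Fin r) (k : Fin (r+1)) : FF r :=
  if (k:ℕ) = (j:ℕ) then
    FreeGroup.of j.castSucc * FreeGroup.of j.succ * (FreeGroup.of j.castSucc)⁻¹
  else if (k:ℕ) = (j:ℕ)+1 then FreeGroup.of j.castSucc
  else FreeGroup.of k

/-- The inverse Artin substitution for `σ_j`. -/
def sigB (j : Fin r) (k : Fin (r+1)) : FF r :=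
  if (k:ℕ) = (j:ℕ) then FreeGroup.of j.succ
  else if (k:ℕ) = (j:ℕ)+1 then
    (FreeGroup.of j.succ)⁻¹ * FreeGroup.of j.castSucc * FreeGroup.of j.succ
  else FreeGroup.of k

lemma sigA_cast (j : Fin r) : sigA j j.castSucc =
    FreeGroup.of j.castSucc * FreeGroup.of j.succ * (FreeGroup.of j.castSucc)⁻¹ := by
  simp [sigA]

lemma sigA_succ (j : Fin r) : sigA j j.succ = FreeGroup.of j.castSucc := by
  rw [sigA, if_neg (by simp), if_pos (by simp)]

lemma sigA_other (j : Fin r) (k : Fin (r+1)) (h1 : (k:ℕ) ≠ (j:ℕ))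
    (h2 : (k:ℕ) ≠ (j:ℕ)+1) : sigA j k = FreeGroup.of k := by
  rw [sigA, if_neg h1, if_neg h2]

lemma sigB_cast (j : Fin r) : sigB j j.castSucc = FreeGroup.of j.succ := by
  simp [sigB]

lemma sigB_succ (j : Fin r) : sigB j j.succ =
    (FreeGroup.of j.succ)⁻¹ * FreeGroup.of j.castSucc * FreeGroup.of j.succ := by
  rw [sigB, if_neg (by simp), if_pos (by simp)]

lemma sigB_other (j : Fin r) (k : Fin (r+1)) (h1 : (k:ℕ) ≠ (j:ℕ))
    (h2 : (k:ℕ) ≠ (j:ℕ)+1) : sigB j k = FreeGroup.of k := by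
  rw [sigB, if_neg h1, if_neg h2]

lemma comp_BA (j : Fin r) :
    (FreeGroup.lift (sigB j)).comp (FreeGroup.lift (sigA j)) = MonoidHom.id (FF r) := by
  apply FreeGroup.ext_hom; intro k
  simp only [MonoidHom.comp_apply, FreeGroup.lift_apply_of, MonoidHom.id_apply]
  by_cases h1 : (k:ℕ) = (j:ℕ)
  · have hk : k = j.castSucc := Fin.ext (by simpa using h1)
    subst hk
    rw [sigA_cast]
    simp only [map_mul, map_inv, FreeGroup.lift_apply_of, sigB_cast, sigB_succ]
    group
  · by_cases h2 : (k:ℕ) = (j:ℕ)+1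
    · have hk : k = j.succ := Fin.ext (by simpa using h2)
      subst hk
      rw [sigA_succ]
      simp only [FreeGroup.lift_apply_of, sigB_cast]
    · rw [sigA_other j k h1 h2, FreeGroup.lift_apply_of, sigB_other j k h1 h2]

lemma comp_AB (j : Fin r) :
    (FreeGroup.lift (sigA j)).comp (FreeGroup.lift (sigB j)) = MonoidHom.id (FF r) := by
  apply FreeGroup.ext_hom; intro k
  simp only [MonoidHom.comp_apply, FreeGroup.lift_apply_of, MonoidHom.id_apply]
  by_cases h1 : (k:ℕ) = (j:ℕ)
  · have hk : k = j.castSucc := Fin.ext (by simpa using h1)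
    subst hk
    rw [sigB_cast]
    simp only [FreeGroup.lift_apply_of, sigA_succ]
  · by_cases h2 : (k:ℕ) = (j:ℕ)+1
    · have hk : k = j.succ := Fin.ext (by simpa using h2)
      subst hk
      rw [sigB_succ]
      simp only [map_mul, map_inv, FreeGroup.lift_apply_of, sigA_cast, sigA_succ]
      group
    · rw [sigB_other j k h1 h2, FreeGroup.lift_apply_of, sigA_other j k h1 h2]

/-- The Artin automorphism `σ_j` of the free group on the punctures. -/
def sAut (j : Fin r) : MulAut (FF r) :=
  MonoidHom.toMulEquiv (FreeGroup.lift (sigA j)) (FreeGroup.lift (sigB j))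
    (comp_BA j) (comp_AB j)

lemma sAut_of (j : Fin r) (k : Fin (r+1)) : sAut j (FreeGroup.of k) = sigA j k :=
  FreeGroup.lift_apply_of

lemma sAut_other (j : Fin r) (k : Fin (r+1)) (h1 : (k:ℕ) ≠ (j:ℕ))
    (h2 : (k:ℕ) ≠ (j:ℕ)+1) : sAut j (FreeGroup.of k) = FreeGroup.of k := by
  rw [sAut_of, sigA_other j k h1 h2]

lemma mulAut_ext {α : Type*} {φ ψ : MulAut (FreeGroup α)}
    (h : ∀ a, φ (FreeGroup.of a) = ψ (FreeGroup.of a)) : φ = ψ := by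
  have : (φ : FreeGroup α →* FreeGroup α) = ψ := FreeGroup.ext_hom _ _ h
  exact MulEquiv.toMonoidHom_injective this


lemma sAut_commute (i j : Fin r) (hij : (i:ℕ) + 2 ≤ (j:ℕ)) :
    sAut (r:=r) i * sAut j = sAut j * sAut i := by
  have e1 : sigA j i.castSucc = FreeGroup.of i.castSucc :=
    sigA_other j _ (by simp only [Fin.coe_castSucc]; omega) (by simp only [Fin.coe_castSucc]; omega)
  have e2 : sigA j i.succ = FreeGroup.of i.succ :=
    sigA_other j _ (by simp only [Fin.val_succ]; omega) (by simp only [Fin.val_succ]; omega)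
  have e3 : sigA i j.castSucc = FreeGroup.of j.castSucc :=
    sigA_other i _ (by simp only [Fin.coe_castSucc]; omega) (by simp only [Fin.coe_castSucc]; omega)
  have e4 : sigA i j.succ = FreeGroup.of j.succ :=
    sigA_other i _ (by simp only [Fin.val_succ]; omega) (by simp only [Fin.val_succ]; omega)
  apply mulAut_ext; intro k
  rw [MulAut.mul_apply, MulAut.mul_apply]
  by_cases h1 : (k:ℕ) = (i:ℕ)
  · have hk : k = i.castSucc := Fin.ext (by simpa using h1)
    subst hk
    simp only [sAut_of, map_mul, map_inv, sigA_cast, sigA_succ, e1, e2, e3, e4]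
  · by_cases h2 : (k:ℕ) = (i:ℕ)+1
    · have hk : k = i.succ := Fin.ext (by simpa using h2)
      subst hk
      simp only [sAut_of, map_mul, map_inv, sigA_cast, sigA_succ, e1, e2, e3, e4]
    · by_cases h3 : (k:ℕ) = (j:ℕ)
      · have hk : k = j.castSucc := Fin.ext (by simpa using h3)
        subst hk
        simp only [sAut_of, map_mul, map_inv, sigA_cast, sigA_succ, e1, e2, e3, e4]
      · by_cases h4 : (k:ℕ) = (j:ℕ)+1
        · have hk : k = j.succ := Fin.ext (by simpa using h4)
          subst hk
          simp only [sAut_of, map_mul, map_inv, sigA_cast, sigA_succ, e1, e2, e3, e4]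
        · have e5 : sigA i k = FreeGroup.of k := sigA_other i k h1 h2
          have e6 : sigA j k = FreeGroup.of k := sigA_other j k h3 h4
          simp only [sAut_of, e5, e6]

lemma sAut_braid (i j : Fin r) (hij : (i:ℕ) + 1 = (j:ℕ)) :
    sAut (r:=r) i * sAut j * sAut i = sAut j * sAut i * sAut j := by
  have hcs : i.succ = j.castSucc := Fin.ext (by simp [hij])
  have eb : sigA i j.castSucc = FreeGroup.of i.castSucc := by
    rw [← hcs]; exact sigA_succ i
  have ec : sigA i j.succ = FreeGroup.of j.succ :=
    sigA_other i _ (by simp only [Fin.val_succ]; omega) (by simp only [Fin.val_succ]; omega)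
  have ea : sigA j i.castSucc = FreeGroup.of i.castSucc :=
    sigA_other j _ (by simp only [Fin.coe_castSucc]; omega) (by simp only [Fin.coe_castSucc]; omega)
  apply mulAut_ext; intro k
  rw [MulAut.mul_apply, MulAut.mul_apply, MulAut.mul_apply, MulAut.mul_apply]
  by_cases h1 : (k:ℕ) = (i:ℕ)
  · have hk : k = i.castSucc := Fin.ext (by simpa using h1)
    subst hk
    simp only [hcs, sAut_of, map_mul, map_inv, sigA_cast, sigA_succ, eb, ec, ea]
    group
  · by_cases h2 : (k:ℕ) = (i:ℕ)+1
    · have hk : k = i.succ := Fin.ext (by simpa using h2)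
      subst hk
      simp only [hcs, sAut_of, map_mul, map_inv, sigA_cast, sigA_succ, eb, ec, ea]
    · by_cases h3 : (k:ℕ) = (j:ℕ)+1
      · have hk : k = j.succ := Fin.ext (by simpa using h3)
        subst hk
        simp only [hcs, sAut_of, map_mul, map_inv, sigA_cast, sigA_succ, eb, ec, ea]
      · have h4 : (k:ℕ) ≠ (j:ℕ) := by omega
        have e5 : sigA i k = FreeGroup.of k := sigA_other i k h1 h2
        have e6 : sigA j k = FreeGroup.of k := sigA_other j k h4 h3
        simp only [sAut_of, e5, e6]

lemma relsHold : ∀ w ∈ braidRels r, FreeGroup.lift (fun j : Fin r => sAut (r:=r) j) w = 1 := by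
  rintro w (⟨i, j, hij, rfl⟩ | ⟨i, j, hij, rfl⟩)
  · simp only [map_mul, map_inv, FreeGroup.lift_apply_of]
    rw [mul_inv_eq_one]
    exact sAut_commute i j hij
  · simp only [map_mul, map_inv, FreeGroup.lift_apply_of]
    rw [mul_inv_eq_one]
    exact sAut_braid i j hij

/-- The Artin action of the braid group. -/
noncomputable def rho : BraidGroup r →* MulAut (FF r) :=
  PresentedGroup.toGroup relsHold

lemma rho_sigma {i : ℕ} (hi : i < r) :
    rho (braidSigma r i) = sAut (⟨i, hi⟩ : Fin r) := by
  rw [braidSigma, dif_pos hi]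
  exact PresentedGroup.toGroup.of relsHold

/-- Prefix product `σ₀σ₁⋯σ_{i-1}`. -/
noncomputable def cword (r i : ℕ) : BraidGroup r :=
  ((List.range i).map (braidSigma r)).prod

lemma cword_succ (i : ℕ) : cword r (i+1) = cword r i * braidSigma r i := by
  rw [cword, cword, List.range_succ, List.map_append, List.prod_append]
  simp

lemma braidH_mul_cword (i : ℕ) :
    braidH r i * cword r i = cword r i * (braidSigma r i)^2 := by
  rw [braidH, cword]
  group

lemma cword_formula : ∀ (i : ℕ) (hir0 : i ≤ r) (k : Fin (r+1)),
    ((∀ hk : (k:ℕ) < i, rho (cword r i) (FreeGroup.of k)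
        = FreeGroup.of (0 : Fin (r+1)) *
          FreeGroup.of (⟨(k:ℕ)+1, by omega⟩ : Fin (r+1)) *
          (FreeGroup.of (0 : Fin (r+1)))⁻¹)
    ∧ ((k:ℕ) = i → rho (cword r i) (FreeGroup.of k) = FreeGroup.of (0 : Fin (r+1)))
    ∧ (i < (k:ℕ) → rho (cword r i) (FreeGroup.of k) = FreeGroup.of k)) := by
  intro i
  induction i with
  | zero =>
    intro hir0 k
    have h1 : cword r 0 = 1 := by simp [cword]
    rw [h1, map_one]
    refine ⟨fun hk => absurd hk (Nat.not_lt_zero _), fun hk => ?_, fun hk => rfl⟩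
    have : k = (0 : Fin (r+1)) := Fin.ext (by simpa using hk)
    rw [this]; rfl
  | succ i IH =>
    intro hi k
    have hir : i < r := hi
    have hii : i ≤ r := le_of_lt hir
    have hc : ∀ x, rho (cword r (i+1)) x
        = rho (cword r i) (sAut (⟨i, hir⟩ : Fin r) x) := by
      intro x
      rw [cword_succ, map_mul, rho_sigma hir, MulAut.mul_apply]
    refine ⟨fun hk => ?_, fun hk => ?_, fun hk => ?_⟩
    · rw [hc]
      by_cases h1 : (k:ℕ) < i
      · rw [sAut_other _ _ (show (k:ℕ) ≠ i by omega) (show (k:ℕ) ≠ i+1 by omega)]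
        exact (IH hii k).1 h1
      · -- k has value i
        have hki : (k:ℕ) = i := by omega
        have hkc : k = Fin.castSucc (⟨i, hir⟩ : Fin r) := Fin.ext (by simpa using hki)
        conv_lhs => rw [hkc, sAut_of, sigA_cast]
        simp only [map_mul, map_inv]
        have e1 : rho (cword r i) (FreeGroup.of (Fin.castSucc (⟨i, hir⟩ : Fin r)))
            = FreeGroup.of (0 : Fin (r+1)) :=
          (IH hii _).2.1 rfl
        have e2 : rho (cword r i) (FreeGroup.of (Fin.succ (⟨i, hir⟩ : Fin r)))
            = FreeGroup.of (Fin.succ (⟨i, hir⟩ : Fin r)) :=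
          (IH hii _).2.2 (by simp)
        rw [e1, e2]
        have heq : (⟨(k:ℕ)+1, by omega⟩ : Fin (r+1)) = Fin.succ (⟨i, hir⟩ : Fin r) :=
          Fin.ext (by simp [hki])
        rw [heq]
    · -- k has value i+1
      rw [hc]
      have hkc : k = Fin.succ (⟨i, hir⟩ : Fin r) := Fin.ext (by simpa using hk)
      conv_lhs => rw [hkc, sAut_of, sigA_succ]
      exact (IH hii _).2.1 rfl
    · rw [hc, sAut_other _ _ (show (k:ℕ) ≠ i by omega) (show (k:ℕ) ≠ i+1 by omega)]
      exact (IH hii k).2.2 (by omega)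

/-- The retraction killing `x₀` and sending `x_k` (`k ≥ 1`) to the `(k-1)`-st generator. -/
noncomputable def qh : FF r →* FreeGroup (Fin r) :=
  FreeGroup.lift (fun k : Fin (r+1) =>
    if h : (k:ℕ) = 0 then 1
    else FreeGroup.of (⟨(k:ℕ)-1, by have := k.isLt; omega⟩ : Fin r))

lemma qh_zero : qh (FreeGroup.of (0 : Fin (r+1))) = 1 := by
  rw [qh, FreeGroup.lift_apply_of, dif_pos (by simp)]

lemma qh_succ (i : Fin r) : qh (FreeGroup.of i.succ) = FreeGroup.of i := by
  rw [qh, FreeGroup.lift_apply_of, dif_neg (by simp)]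
  exact congrArg FreeGroup.of (Fin.ext (by simp))

lemma rhoH_comp (i : Fin r) (x : FF r) :
    rho (braidH r i) (rho (cword r i) x) = rho (cword r i) (sAut i (sAut i x)) := by
  have h2 : rho (braidH r (i:ℕ)) * rho (cword r (i:ℕ))
      = rho (cword r (i:ℕ)) * (sAut i * sAut i) := by
    rw [← map_mul, braidH_mul_cword, map_mul, pow_two, map_mul, rho_sigma i.isLt, Fin.eta]
  calc rho (braidH r i) (rho (cword r i) x)
      = (rho (braidH r (i:ℕ)) * rho (cword r (i:ℕ))) x := by rw [MulAut.mul_apply]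
    _ = (rho (cword r (i:ℕ)) * (sAut i * sAut i)) x := by rw [h2]
    _ = rho (cword r i) (sAut i (sAut i x)) := by
        rw [MulAut.mul_apply, MulAut.mul_apply]

lemma rhoC_cast (i : Fin r) :
    rho (cword r (i:ℕ)) (FreeGroup.of i.castSucc) = FreeGroup.of (0 : Fin (r+1)) :=
  (cword_formula (i:ℕ) (le_of_lt i.isLt) i.castSucc).2.1 (by simp)

lemma rhoC_succ (i : Fin r) :
    rho (cword r (i:ℕ)) (FreeGroup.of i.succ) = FreeGroup.of i.succ :=
  (cword_formula (i:ℕ) (le_of_lt i.isLt) i.succ).2.2 (by simp)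

lemma rhoH_x0 (i : Fin r) :
    rho (braidH r i) (FreeGroup.of (0 : Fin (r+1)))
      = (FreeGroup.of (0 : Fin (r+1)) * FreeGroup.of i.succ) * FreeGroup.of (0 : Fin (r+1)) *
        (FreeGroup.of (0 : Fin (r+1)) * FreeGroup.of i.succ)⁻¹ := by
  have h := rhoH_comp i (FreeGroup.of i.castSucc)
  rw [rhoC_cast i] at h
  rw [h]
  simp only [sAut_of, sigA_cast, map_mul, map_inv, sigA_succ, rhoC_cast, rhoC_succ]
  group

lemma rhoH_q (i : Fin r) : ∀ x, qh (rho (braidH r i) x) = qh x := by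
  have key : ∀ k : Fin (r+1),
      qh (rho (cword r (i:ℕ)) (sAut i (sAut i (FreeGroup.of k))))
        = qh (rho (cword r (i:ℕ)) (FreeGroup.of k)) := by
    intro k
    by_cases h1 : (k:ℕ) = (i:ℕ)
    · have hk : k = i.castSucc := Fin.ext (by simpa using h1)
      subst hk
      simp only [sAut_of, sigA_cast, map_mul, map_inv, sigA_succ, rhoC_cast, rhoC_succ,
        qh_zero, qh_succ]
      group
    · by_cases h2 : (k:ℕ) = (i:ℕ)+1
      · have hk : k = i.succ := Fin.ext (by simpa using h2)
        subst hk
        simp only [sAut_of, sigA_succ, sigA_cast, map_mul, map_inv, rhoC_cast, rhoC_succ,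
          qh_zero, qh_succ]
        group
      · rw [sAut_other i k h1 h2, sAut_other i k h1 h2]
  have E : qh.comp (((rho (braidH r (i:ℕ)) : MulAut (FF r)) : FF r →* FF r).comp
      ((rho (cword r (i:ℕ)) : MulAut (FF r)) : FF r →* FF r))
      = qh.comp ((rho (cword r (i:ℕ)) : MulAut (FF r)) : FF r →* FF r) := by
    apply FreeGroup.ext_hom; intro k
    simp only [MonoidHom.comp_apply, MulEquiv.coe_toMonoidHom, MonoidHom.coe_coe]
    rw [rhoH_comp i (FreeGroup.of k)]
    exact key k
  intro x
  have hx : rho (cword r (i:ℕ)) ((rho (cword r (i:ℕ))).symm x) = x :=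
    MulEquiv.apply_symm_apply _ x
  have := DFunLike.congr_fun E ((rho (cword r (i:ℕ))).symm x)
  simp only [MonoidHom.comp_apply, MulEquiv.coe_toMonoidHom, MonoidHom.coe_coe] at this
  rw [hx] at this
  exact this

/-- The ambient semidirect product `F ⋊ Aut F`. -/
abbrev SD (r : ℕ) :=
  SemidirectProduct (FF r) (MulAut (FF r)) (MonoidHom.id (MulAut (FF r)))

/-- The subgroup of pairs `(a, φ)` with `φ(x₀) = a⁻¹x₀a` and `q ∘ φ = q`. -/
noncomputable def ssub : Subgroup (SD r) where
  carrier := {p | p.right (FreeGroup.of (0 : Fin (r+1)))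
      = p.left⁻¹ * FreeGroup.of (0 : Fin (r+1)) * p.left ∧ ∀ x, qh (p.right x) = qh x}
  one_mem' := by
    constructor
    · simp [SemidirectProduct.one_left, SemidirectProduct.one_right]
    · intro x; simp [SemidirectProduct.one_right]
  mul_mem' := by
    rintro p p' ⟨h1, h2⟩ ⟨g1, g2⟩
    constructor
    · rw [SemidirectProduct.mul_right, SemidirectProduct.mul_left, MulAut.mul_apply, g1]
      simp only [map_mul, map_inv, h1, MonoidHom.id_apply]
      group
    · intro x
      rw [SemidirectProduct.mul_right, MulAut.mul_apply, h2, g2]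
  inv_mem' := by
    rintro p ⟨h1, h2⟩
    have h2' : ∀ x, qh ((p.right⁻¹) x) = qh x := by
      intro x
      have hx : p.right ((p.right⁻¹) x) = x := by
        rw [← MulAut.mul_apply, mul_inv_cancel, MulAut.one_apply]
      calc qh ((p.right⁻¹) x) = qh (p.right ((p.right⁻¹) x)) := (h2 _).symm
        _ = qh x := by rw [hx]
    constructor
    · rw [SemidirectProduct.inv_right, SemidirectProduct.inv_left, MonoidHom.id_apply]
      have hx : (p.right⁻¹) (p.right (FreeGroup.of (0 : Fin (r+1))))
          = FreeGroup.of (0 : Fin (r+1)) := by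
        rw [← MulAut.mul_apply, inv_mul_cancel, MulAut.one_apply]
      rw [h1] at hx
      simp only [map_mul, map_inv] at hx ⊢
      have hgoal : (p.right⁻¹) (FreeGroup.of (0 : Fin (r+1)))
          = ((p.right⁻¹) p.left) * FreeGroup.of (0 : Fin (r+1)) * ((p.right⁻¹) p.left)⁻¹ := by
        conv_rhs => rw [← hx]
        group
      rw [hgoal]
      group
    · exact h2'

/-- The "conjugating word modulo `x₀`" homomorphism on the subgroup. -/
noncomputable def phiH : ssub (r:=r) →* FreeGroup (Fin r) where
  toFun p := qh p.val.left
  map_one' := by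
    show qh ((1 : SD r).left) = 1
    rw [SemidirectProduct.one_left, map_one]
  map_mul' p p' := by
    show qh ((p.val * p'.val).left) = qh p.val.left * qh p'.val.left
    rw [SemidirectProduct.mul_left, map_mul, MonoidHom.id_apply, p.2.2 p'.val.left]

/-- The crossed homomorphism recording the monodromies together with their
conjugating words. -/
noncomputable def theta : FreeGroup (Fin r) →* ssub (r:=r) :=
  FreeGroup.lift (fun i : Fin r =>
    ⟨⟨(FreeGroup.of (0 : Fin (r+1)) * FreeGroup.of i.succ)⁻¹, rho (braidH r i)⟩,
      ⟨by
        show rho (braidH r i) (FreeGroup.of (0 : Fin (r+1))) = _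
        rw [rhoH_x0 i]
        group, rhoH_q i⟩⟩)

/-- `w ↦ w` with all generators inverted; an injective endomorphism. -/
noncomputable def muh : FreeGroup (Fin r) →* FreeGroup (Fin r) :=
  FreeGroup.lift (fun i => (FreeGroup.of i)⁻¹)

lemma muh_muh (w : FreeGroup (Fin r)) : muh (muh w) = w := by
  have : (muh (r:=r)).comp muh = MonoidHom.id _ := by
    apply FreeGroup.ext_hom; intro i
    simp [muh]
  exact DFunLike.congr_fun this w

/-- Left-multiplication action of the free group on the free group on itself. -/
noncomputable def pihom : FreeGroup (Fin r) →* MulAut (FreeGroup (FreeGroup (Fin r))) :=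
  MonoidHom.mk' (fun g => FreeGroup.freeGroupCongr (Equiv.mulLeft g)) (by
    intro g h
    apply mulAut_ext
    intro b
    simp [MulAut.mul_apply, mul_assoc])

lemma pihom_of (g b : FreeGroup (Fin r)) :
    pihom g (FreeGroup.of b) = FreeGroup.of (g * b) := by
  simp [pihom]

/-- The Magnus-type embedding used to compute centralizer images. -/
noncomputable def ehom : FF r →* SemidirectProduct (FreeGroup (FreeGroup (Fin r)))
    (FreeGroup (Fin r)) (pihom (r:=r)) :=
  FreeGroup.lift (fun k : Fin (r+1) =>
    if h : (k:ℕ) = 0 then ⟨FreeGroup.of (1 : FreeGroup (Fin r)), 1⟩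
    else ⟨1, FreeGroup.of (⟨(k:ℕ)-1, by have := k.isLt; omega⟩ : Fin r)⟩)

lemma ehom_right (x : FF r) : (ehom x).right = qh x := by
  have : (SemidirectProduct.rightHom : SemidirectProduct _ _ (pihom (r:=r)) →* _).comp ehom
      = qh := by
    apply FreeGroup.ext_hom; intro k
    simp only [MonoidHom.comp_apply, ehom, qh, FreeGroup.lift_apply_of]
    by_cases h : (k:ℕ) = 0
    · rw [dif_pos h, dif_pos h]; rfl
    · rw [dif_neg h, dif_neg h]; rfl
  exact DFunLike.congr_fun this x

lemma commute_qh {A : FF r}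
    (hA : A * FreeGroup.of (0 : Fin (r+1)) = FreeGroup.of (0 : Fin (r+1)) * A) :
    qh A = 1 := by
  have h0 : ehom (FreeGroup.of (0 : Fin (r+1)))
      = ⟨FreeGroup.of (1 : FreeGroup (Fin r)), 1⟩ := by
    rw [ehom, FreeGroup.lift_apply_of, dif_pos (by simp)]
  have h := congrArg ehom hA
  rw [map_mul, map_mul, h0] at h
  have hleft := congrArg SemidirectProduct.left h
  rw [SemidirectProduct.mul_left, SemidirectProduct.mul_left] at hleft
  simp only [SemidirectProduct.left, SemidirectProduct.right] at hleft
  rw [ehom_right] at hleft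
  rw [pihom_of, mul_one, map_one, MulAut.one_apply] at hleft
  -- hleft : (ehom A).left * of (qh A) = of 1 * (ehom A).left
  set ab : FreeGroup (FreeGroup (Fin r)) →* Multiplicative (FreeGroup (Fin r) →₀ ℤ) :=
    FreeGroup.lift (fun b => Multiplicative.ofAdd (Finsupp.single b 1)) with hab
  have h2 := congrArg ab hleft
  rw [map_mul, map_mul, hab, FreeGroup.lift_apply_of, FreeGroup.lift_apply_of] at h2
  rw [mul_comm (Multiplicative.ofAdd (Finsupp.single (1 : FreeGroup (Fin r)) 1))] at h2
  have h3 := mul_left_cancel h2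
  have h4 : Finsupp.single (qh A) (1:ℤ) = Finsupp.single (1 : FreeGroup (Fin r)) 1 :=
    Multiplicative.ofAdd.injective h3
  rcases (Finsupp.single_eq_single_iff _ _ _ _).mp h4 with ⟨h5, -⟩ | ⟨h5, -⟩
  · exact h5
  · exact absurd h5 one_ne_zero

end Stmt12Aux

/-- the homomorphism from the free group on `r` generators to `B_{r+1}`
sending the `i`-th generator to the local monodromy `hᵢ` is injective; that is,
`h₁, …, h_r` freely generate a free subgroup of rank `r` of the braid group. -/
theorem stmt12 (r : ℕ) (hr : 1 ≤ r) :
    Function.Injective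
      (FreeGroup.lift (fun i : Fin r => braidH r (i : ℕ)) :
        FreeGroup (Fin r) →* BraidGroup r) := by
  open Stmt12Aux in
  rw [injective_iff_map_eq_one]
  intro w hw
  set L : FreeGroup (Fin r) →* BraidGroup r :=
    FreeGroup.lift (fun i : Fin r => braidH r (i : ℕ)) with hL
  -- the MulAut component of θ is ρ ∘ L
  have hcomp : (SemidirectProduct.rightHom.comp
      ((Stmt12Aux.ssub (r:=r)).subtype.comp Stmt12Aux.theta))
      = Stmt12Aux.rho.comp L := by
    apply FreeGroup.ext_hom; intro i
    simp only [MonoidHom.comp_apply, hL, FreeGroup.lift_apply_of, Stmt12Aux.theta]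
    rfl
  have hrt : ((Stmt12Aux.theta w : Stmt12Aux.ssub (r:=r)) : Stmt12Aux.SD r).right = 1 := by
    have := DFunLike.congr_fun hcomp w
    simp only [MonoidHom.comp_apply] at this
    rw [hw, map_one] at this
    exact this
  obtain ⟨hconj, hq⟩ := (Stmt12Aux.theta w : Stmt12Aux.ssub (r:=r)).2
  rw [hrt, MulAut.one_apply] at hconj
  set A := ((Stmt12Aux.theta w : Stmt12Aux.ssub (r:=r)) : Stmt12Aux.SD r).left with hA
  have hcomm : A * FreeGroup.of (0 : Fin (r+1)) = FreeGroup.of (0 : Fin (r+1)) * A := by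
    conv_lhs => rw [hconj]
    group
  have hqA : Stmt12Aux.qh A = 1 := Stmt12Aux.commute_qh hcomm
  have hmu : (Stmt12Aux.phiH.comp Stmt12Aux.theta : FreeGroup (Fin r) →* FreeGroup (Fin r))
      = Stmt12Aux.muh := by
    apply FreeGroup.ext_hom; intro i
    simp only [MonoidHom.comp_apply, Stmt12Aux.theta, FreeGroup.lift_apply_of, Stmt12Aux.muh]
    show Stmt12Aux.qh ((FreeGroup.of (0 : Fin (r+1)) * FreeGroup.of i.succ)⁻¹)
      = (FreeGroup.of i)⁻¹
    rw [map_inv, map_mul, Stmt12Aux.qh_zero, Stmt12Aux.qh_succ, one_mul]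
  have hmw : Stmt12Aux.muh w = 1 := by
    have := DFunLike.congr_fun hmu w
    simp only [MonoidHom.comp_apply] at this
    rw [← this, ← hqA]
    rfl
  have := Stmt12Aux.muh_muh w
  rw [hmw, map_one] at this
  exact this.symm
end

section
/- In B_{r+1} one has the identity h_r·h_{r−1}⋯h_2·h_1 = σ₁σ₂⋯σ_{r−1}σ_r·σ_rσ_{r−1}⋯σ₂σ₁. (That is, the monodromy at infinity h_∞ = h_r⋯h_1 of a non-isotrivial rational polynomial of simple type equals σ₁σ₂⋯σ_rσ_r⋯σ₂σ₁.) -/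
lemma stmt13_aux (r k : ℕ) :
    ((List.range k).reverse.map (braidH r)).prod =
      ((List.range k).map (braidSigma r)).prod *
        (((List.range k).map (braidSigma r)).reverse).prod := by
  induction k with
  | zero => simp
  | succ n ih =>
    simp only [List.range_succ, List.reverse_append, List.map_append, List.map_cons,
      List.map_nil, List.prod_append, List.prod_cons, List.prod_nil, List.reverse_cons,
      List.singleton_append, List.prod_cons, ih, braidH]
    simp [sq, mul_assoc]

/-- the monodromy at infinity `h_∞ = h_r·h_{r−1}⋯h_1` equals
`σ₁σ₂⋯σ_{r−1}σ_r·σ_rσ_{r−1}⋯σ₂σ₁` in `B_{r+1}`. -/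
theorem stmt13 (r : ℕ) (hr : 1 ≤ r) :
    ((List.range r).reverse.map (braidH r)).prod =
      ((List.range r).map (braidSigma r)).prod *
        (((List.range r).map (braidSigma r)).reverse).prod := by
  exact stmt13_aux r r
end
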